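/- Let g, a be random variables and x = (x_1,...,x_T) a finite sequence of random variables generated sequentially. Suppose g and a are deterministic functions of x (so that I(g; a | x_1,...,x_T) = 0), and suppose that x_0 is a deterministic constant (so I(g; a | x_{<1}) = I(g; a)). If for every step t ≥ 1, either I(g; x_t | x_{<t}) = 0 or I(a; x_t | x_{<t}) = 0 holds, then I(g; a) = 0. -/

import Mathlib

open scoped BigOperators

/-- Probability of the event `X = x` under the weight function `p` on a finite sample space. -/
noncomputable def pr {Ω α : Type*} [Fintype Ω] [DecidableEq α] (p : Ω → ℝ) (X : Ω → α) (x : α) : ℝ :=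
  ∑ ω, if X ω = x then p ω else 0

/-- Shannon entropy of a discrete random variable `X` with finite support. -/
noncomputable def ent {Ω α : Type*} [Fintype Ω] [Fintype α] [DecidableEq α]
    (p : Ω → ℝ) (X : Ω → α) : ℝ :=
  -∑ x, pr p X x * Real.log (pr p X x)

/-- Conditional entropy `H(X | Y) = H(X, Y) - H(Y)`. -/
noncomputable def condEnt {Ω α β : Type*} [Fintype Ω] [Fintype α] [Fintype β]
    [DecidableEq α] [DecidableEq β] (p : Ω → ℝ) (X : Ω → α) (Y : Ω → β) : ℝ :=
  ent p (fun ω => (X ω, Y ω)) - ent p Y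

/-- Mutual information `I(X; Y) = H(X) + H(Y) - H(X, Y)`. -/
noncomputable def mi {Ω α β : Type*} [Fintype Ω] [Fintype α] [Fintype β]
    [DecidableEq α] [DecidableEq β] (p : Ω → ℝ) (X : Ω → α) (Y : Ω → β) : ℝ :=
  ent p X + ent p Y - ent p (fun ω => (X ω, Y ω))

/-- Conditional mutual information
`I(X; Y | Z) = H(X, Z) + H(Y, Z) - H(X, Y, Z) - H(Z)`. -/
noncomputable def cmi {Ω α β γ : Type*} [Fintype Ω] [Fintype α] [Fintype β] [Fintype γ]
    [DecidableEq α] [DecidableEq β] [DecidableEq γ]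
    (p : Ω → ℝ) (X : Ω → α) (Y : Ω → β) (Z : Ω → γ) : ℝ :=
  ent p (fun ω => (X ω, Z ω)) + ent p (fun ω => (Y ω, Z ω))
    - ent p (fun ω => ((X ω, Y ω), Z ω)) - ent p Z

/-- Variation of information `VI(X, Y) = H(X) + H(Y) - 2 I(X; Y)`. -/
noncomputable def VI {Ω α β : Type*} [Fintype Ω] [Fintype α] [Fintype β]
    [DecidableEq α] [DecidableEq β] (p : Ω → ℝ) (X : Ω → α) (Y : Ω → β) : ℝ :=
  ent p X + ent p Y - 2 * mi p X Y

/-- Prefix random vector `(x_1, ..., x_t)` of a sequence of random variables. -/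
def pref {Ω α : Type*} (x : ℕ → Ω → α) (t : ℕ) : Ω → (Fin t → α) :=
  fun ω i => x (i + 1) ω

/-!
Conditional mutual information is nonnegative (Gibbs' inequality, from `log t ≤ t - 1`), and the
chain rule gives `I(X;Y|W) + I(X;U|Y,W) = I(X;U|W) + I(X;Y|U,W)`. Hence conditioning additionally
on a variable `U` with `I(X;U|W) = 0` can only increase `I(X;Y|W)`. Applied with `U = x_{t+1}` and
`W = x_{≤t}` for `t = 0, …, T-1` (to `g` or to `a`, whichever is independent of `x_{t+1}`), this
gives `I(g;a) = I(g;a | x_{<1}) ≤ I(g;a | x_{≤T}) = 0`, the last because `g` and `a` are functions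
of `x_{≤T}`.
-/

open Finset Real Function

section Distribution

variable {Ω α β γ : Type*} [Fintype Ω]

lemma pr_nonneg [DecidableEq α] {p : Ω → ℝ} (hp : ∀ ω, 0 ≤ p ω) (X : Ω → α) (x : α) :
    0 ≤ pr p X x :=
  sum_nonneg fun ω _ => by split_ifs <;> simp [hp ω]

lemma pr_comp_of_injective [DecidableEq α] [DecidableEq β] (p : Ω → ℝ) (X : Ω → α)
    {f : α → β} (hf : Injective f) (x : α) : pr p (fun ω => f (X ω)) (f x) = pr p X x := by
  simp only [pr, hf.eq_iff]

lemma ent_comp_of_injective [Fintype α] [Fintype β] [DecidableEq α] [DecidableEq β]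
    (p : Ω → ℝ) (X : Ω → α) {f : α → β} (hf : Injective f) :
    ent p (fun ω => f (X ω)) = ent p X := by
  refine congrArg Neg.neg (Fintype.sum_of_injective f hf _ _ (fun y hy => ?_) fun x => ?_).symm
  · have : pr p (fun ω => f (X ω)) y = 0 :=
      sum_eq_zero fun ω _ => if_neg fun h => hy ⟨X ω, h⟩
    simp [this]
  · rw [pr_comp_of_injective p X hf]

variable [DecidableEq α] [DecidableEq β] [DecidableEq γ] (p : Ω → ℝ) (X : Ω → α) (Y : Ω → β)
  (Z : Ω → γ)

lemma pr_pair_eq_sum_middle [Fintype β] (x : α) (z : γ) :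
    pr p (fun ω => (X ω, Z ω)) (x, z) = ∑ y, pr p (fun ω => ((X ω, Y ω), Z ω)) ((x, y), z) := by
  simp only [pr, Prod.mk.injEq]
  rw [sum_comm]
  refine sum_congr rfl fun ω _ => ?_
  by_cases h1 : X ω = x <;> by_cases h2 : Z ω = z <;> simp [h1, h2]

lemma pr_pair_eq_sum_left [Fintype α] (y : β) (z : γ) :
    pr p (fun ω => (Y ω, Z ω)) (y, z) = ∑ x, pr p (fun ω => ((X ω, Y ω), Z ω)) ((x, y), z) := by
  simp only [pr, Prod.mk.injEq]
  rw [sum_comm]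
  refine sum_congr rfl fun ω _ => ?_
  by_cases h1 : Y ω = y <;> by_cases h2 : Z ω = z <;> simp [h1, h2]

lemma pr_eq_sum_sum [Fintype α] [Fintype β] (z : γ) :
    pr p Z z = ∑ x, ∑ y, pr p (fun ω => ((X ω, Y ω), Z ω)) ((x, y), z) := by
  simp only [pr, Prod.mk.injEq]
  rw [sum_congr rfl fun x _ => sum_comm, sum_comm]
  refine sum_congr rfl fun ω _ => ?_
  by_cases h : Z ω = z <;> simp [h, ite_and]

end Distribution

lemma mul_log_ratio_le {q a b c : ℝ} (hq : 0 ≤ q) (ha : q ≤ a) (hb : q ≤ b) (hc : q ≤ c) :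
    q * (log a + log b - log q - log c) ≤ a * b / c - q := by
  rcases hq.eq_or_lt with rfl | hq
  · simpa using div_nonneg (mul_nonneg ha hb) hc
  have ha : 0 < a := hq.trans_le ha
  have hb : 0 < b := hq.trans_le hb
  have hc : 0 < c := hq.trans_le hc
  have hlog : log a + log b - log q - log c = log (a * b / (q * c)) := by
    rw [log_div (by positivity) (by positivity), log_mul (by positivity) (by positivity),
      log_mul (by positivity) (by positivity)]
    ring
  calc q * (log a + log b - log q - log c) ≤ q * (a * b / (q * c) - 1) := by
        rw [hlog]
        exact mul_le_mul_of_nonneg_left (log_le_sub_one_of_pos (by positivity)) hq.le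
    _ = a * b / c - q := by field_simp

/-- Nonnegativity of the mutual information between the row and the column index of a matrix of
unnormalised weights `q`. -/
lemma sum_mul_log_rows_add_cols_le {α β : Type*} [Fintype α] [Fintype β] (q : α → β → ℝ)
    (hq : ∀ x y, 0 ≤ q x y) :
    ∑ x, (∑ y, q x y) * log (∑ y, q x y) + ∑ y, (∑ x, q x y) * log (∑ x, q x y)
      ≤ ∑ x, ∑ y, q x y * log (q x y) + (∑ x, ∑ y, q x y) * log (∑ x, ∑ y, q x y) := by
  set r := fun x => ∑ y, q x y
  set c := fun y => ∑ x, q x y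
  set s := ∑ x, ∑ y, q x y
  have hc : ∑ y, c y = s := sum_comm
  have hq_le_r x y : q x y ≤ r x := single_le_sum (fun y _ => hq x y) (mem_univ y)
  have hpoint x y :
      q x y * (log (r x) + log (c y) - log (q x y) - log s) ≤ r x * c y / s - q x y :=
    mul_log_ratio_le (hq x y) (hq_le_r x y) (single_le_sum (fun x _ => hq x y) (mem_univ x))
      ((hq_le_r x y).trans (single_le_sum (fun x _ => sum_nonneg fun y _ => hq x y) (mem_univ x)))
  have hratio : ∑ x, ∑ y, r x * c y / s = s := by
    simp only [← sum_div, ← mul_sum, ← sum_mul, hc]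
    exact mul_self_div_self s
  have hexpand : ∑ x, ∑ y, q x y * (log (r x) + log (c y) - log (q x y) - log s)
      = ∑ x, r x * log (r x) + ∑ y, c y * log (c y) - ∑ x, ∑ y, q x y * log (q x y)
        - s * log s := by
    simp only [mul_add, mul_sub, sum_add_distrib, sum_sub_distrib, ← sum_mul]
    rw [sum_comm (f := fun x y => q x y * log (c y))]
    simp only [← sum_mul]
    rfl
  have := sum_le_sum fun x (_ : x ∈ univ) => sum_le_sum fun y (_ : y ∈ univ) => hpoint x y
  simp only [sum_sub_distrib, hratio] at this
  linarith

lemma cmi_nonneg {Ω α β γ : Type*} [Fintype Ω] [Fintype α] [Fintype β] [Fintype γ]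
    [DecidableEq α] [DecidableEq β] [DecidableEq γ] {p : Ω → ℝ} (hp : ∀ ω, 0 ≤ p ω)
    (X : Ω → α) (Y : Ω → β) (Z : Ω → γ) : 0 ≤ cmi p X Y Z := by
  have key z := sum_mul_log_rows_add_cols_le
    (fun x y => pr p (fun ω => ((X ω, Y ω), Z ω)) ((x, y), z)) fun x y => pr_nonneg hp _ _
  have := sum_le_sum fun z (_ : z ∈ univ) => key z
  simp only [sum_add_distrib] at this
  simp only [cmi, ent, Fintype.sum_prod_type_right (α₂ := γ), Fintype.sum_prod_type,
    pr_pair_eq_sum_middle p X Y Z, pr_pair_eq_sum_left p X Y Z, pr_eq_sum_sum p X Y Z]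
  linarith

section ConditionalMutualInformation

variable {Ω α β γ δ : Type*} [Fintype Ω] [Fintype α] [Fintype β] [Fintype γ] [Fintype δ]
  [DecidableEq α] [DecidableEq β] [DecidableEq γ] [DecidableEq δ]

lemma cmi_comm (p : Ω → ℝ) (X : Ω → α) (Y : Ω → β) (Z : Ω → γ) :
    cmi p X Y Z = cmi p Y X Z := by
  have hswap : ent p (fun ω => ((Y ω, X ω), Z ω)) = ent p (fun ω => ((X ω, Y ω), Z ω)) :=
    ent_comp_of_injective p (fun ω => ((X ω, Y ω), Z ω)) (f := Prod.map Prod.swap id)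
      (Prod.swap_injective.prodMap injective_id)
  rw [cmi, cmi, hswap]
  ring

lemma ent_pair_comp_right_of_injective (p : Ω → ℝ) (X : Ω → α) (Z : Ω → γ) {e : γ → δ}
    (he : Injective e) : ent p (fun ω => (X ω, e (Z ω))) = ent p (fun ω => (X ω, Z ω)) :=
  ent_comp_of_injective p (fun ω => (X ω, Z ω)) (f := Prod.map id e) (injective_id.prodMap he)

lemma cmi_comp_right_of_injective (p : Ω → ℝ) (X : Ω → α) (Y : Ω → β) (Z : Ω → γ)
    {e : γ → δ} (he : Injective e) : cmi p X Y (fun ω => e (Z ω)) = cmi p X Y Z := by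
  rw [cmi, cmi, ent_pair_comp_right_of_injective p X Z he,
    ent_pair_comp_right_of_injective p Y Z he,
    ent_pair_comp_right_of_injective p (fun ω => (X ω, Y ω)) Z he, ent_comp_of_injective p Z he]

/-- Both sides are `I(X; (U, Y) | W)` by the chain rule. -/
lemma cmi_add_cmi_pair_eq (p : Ω → ℝ) (X : Ω → α) (U : Ω → β) (Y : Ω → γ) (W : Ω → δ) :
    cmi p X Y W + cmi p X U (fun ω => (Y ω, W ω))
      = cmi p X U W + cmi p X Y (fun ω => (U ω, W ω)) := by
  have hXYW : ent p (fun ω => (X ω, (Y ω, W ω))) = ent p (fun ω => ((X ω, Y ω), W ω)) :=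
    ent_comp_of_injective p (fun ω => ((X ω, Y ω), W ω))
      (f := fun v => (v.1.1, (v.1.2, v.2))) (Equiv.prodAssoc α γ δ).injective
  have hXUW : ent p (fun ω => (X ω, (U ω, W ω))) = ent p (fun ω => ((X ω, U ω), W ω)) :=
    ent_comp_of_injective p (fun ω => ((X ω, U ω), W ω))
      (f := fun v => (v.1.1, (v.1.2, v.2))) (Equiv.prodAssoc α β δ).injective
  have hUYW : ent p (fun ω => (U ω, (Y ω, W ω))) = ent p (fun ω => (Y ω, (U ω, W ω))) :=
    ent_comp_of_injective p (fun ω => (Y ω, (U ω, W ω)))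
      (f := fun v => (v.2.1, (v.1, v.2.2))) fun v w h => by
        simp only [Prod.mk.injEq] at h
        exact Prod.ext h.2.1 (Prod.ext h.1 h.2.2)
  have hXUYW : ent p (fun ω => ((X ω, U ω), (Y ω, W ω)))
      = ent p (fun ω => ((X ω, Y ω), (U ω, W ω))) :=
    ent_comp_of_injective p (fun ω => ((X ω, Y ω), (U ω, W ω)))
      (f := fun v => ((v.1.1, v.2.1), (v.1.2, v.2.2))) (Equiv.prodProdProdComm α γ β δ).injective
  simp only [cmi, hXYW, hXUW, hUYW, hXUYW]
  ring

lemma cmi_le_cmi_pair_of_cmi_eq_zero {p : Ω → ℝ} (hp : ∀ ω, 0 ≤ p ω) (X : Ω → α) (Y : Ω → γ)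
    {U : Ω → β} {W : Ω → δ} (hU : cmi p X U W = 0) :
    cmi p X Y W ≤ cmi p X Y (fun ω => (U ω, W ω)) := by
  linarith [cmi_add_cmi_pair_eq p X U Y W, cmi_nonneg hp X U (fun ω => (Y ω, W ω))]

lemma ent_graph (p : Ω → ℝ) (Z : Ω → γ) (F : γ → α) :
    ent p (fun ω => (F (Z ω), Z ω)) = ent p Z :=
  ent_comp_of_injective p Z (f := fun z => (F z, z)) fun _ _ h => congrArg Prod.snd h

lemma cmi_comp_self_eq_zero (p : Ω → ℝ) (Z : Ω → γ) (G : γ → α) (A : γ → β) :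
    cmi p (fun ω => G (Z ω)) (fun ω => A (Z ω)) Z = 0 := by
  rw [cmi, ent_graph p Z G, ent_graph p Z A, ent_graph p Z fun z => (G z, A z)]
  ring

lemma ent_pair_unique [Unique γ] (p : Ω → ℝ) (X : Ω → α) (Z : Ω → γ) :
    ent p (fun ω => (X ω, Z ω)) = ent p X := by
  obtain rfl : Z = fun _ => default := funext fun ω => Unique.uniq _ (Z ω)
  exact ent_comp_of_injective p X (f := fun x => (x, default)) fun _ _ h => congrArg Prod.fst h

lemma ent_unique [Unique γ] {p : Ω → ℝ} (hsum : ∑ ω, p ω = 1) (Z : Ω → γ) : ent p Z = 0 := by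
  have hpr : pr p Z default = 1 := by simp [pr, Unique.eq_default (Z _), hsum]
  simp [ent, hpr]

lemma mi_eq_cmi_of_unique [Unique γ] {p : Ω → ℝ} (hsum : ∑ ω, p ω = 1) (X : Ω → α) (Y : Ω → β)
    (Z : Ω → γ) : mi p X Y = cmi p X Y Z := by
  rw [mi, cmi, ent_pair_unique p X Z, ent_pair_unique p Y Z,
    ent_pair_unique p (fun ω => (X ω, Y ω)) Z, ent_unique hsum Z]
  ring

end ConditionalMutualInformation

section Prefix

variable {Ω α β γ : Type*} [Fintype Ω] [Fintype α] [Fintype β] [Fintype γ]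
  [DecidableEq α] [DecidableEq β] [DecidableEq γ]

-- `(v (Fin.last t), Fin.init v)` at `v = pref x (t + 1) ω` is `(x (t + 1) ω, pref x t ω)` by `rfl`.
lemma cmi_pref_succ (p : Ω → ℝ) (X : Ω → β) (Y : Ω → γ) (x : ℕ → Ω → α) (t : ℕ) :
    cmi p X Y (fun ω => (x (t + 1) ω, pref x t ω)) = cmi p X Y (pref x (t + 1)) :=
  cmi_comp_right_of_injective p X Y (pref x (t + 1))
    (e := fun v => (v (Fin.last t), Fin.init v)) fun v w h => by
      rw [← Fin.snoc_init_self v, ← Fin.snoc_init_self w, (Prod.mk.inj h).1, (Prod.mk.inj h).2]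

lemma cmi_pref_mono {p : Ω → ℝ} (hp : ∀ ω, 0 ≤ p ω) (X : Ω → β) (Y : Ω → γ) (x : ℕ → Ω → α)
    {T : ℕ} (hstep : ∀ t < T,
      cmi p X (x (t + 1)) (pref x t) = 0 ∨ cmi p Y (x (t + 1)) (pref x t) = 0) :
    cmi p X Y (pref x 0) ≤ cmi p X Y (pref x T) := by
  induction T with
  | zero => exact le_rfl
  | succ t ih =>
    refine (ih fun s hs => hstep s (by omega)).trans ?_
    rw [← cmi_pref_succ]
    rcases hstep t (by omega) with hX | hY
    · exact cmi_le_cmi_pair_of_cmi_eq_zero hp X Y hX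
    · rw [cmi_comm p X, cmi_comm p X]
      exact cmi_le_cmi_pair_of_cmi_eq_zero hp Y X hY

end Prefix

/-- limited-interventions debiasing theorem. -/
theorem stmt1 {Ω α β γ : Type*} [Fintype Ω] [Fintype α] [Fintype β] [Fintype γ]
    [DecidableEq α] [DecidableEq β] [DecidableEq γ]
    (p : Ω → ℝ) (hp : ∀ ω, 0 ≤ p ω) (hsum : ∑ ω, p ω = 1)
    (g : Ω → β) (a : Ω → γ) (T : ℕ) (x : ℕ → Ω → α)
    (G : (Fin T → α) → β) (hg : ∀ ω, g ω = G (pref x T ω))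
    (A : (Fin T → α) → γ) (ha : ∀ ω, a ω = A (pref x T ω))
    (hstep : ∀ t, 1 ≤ t → t ≤ T →
      cmi p g (x t) (pref x (t - 1)) = 0 ∨ cmi p a (x t) (pref x (t - 1)) = 0) :
    mi p g a = 0 := by
  have hfinal : cmi p g a (pref x T) = 0 := by
    obtain rfl : g = _ := funext hg
    obtain rfl : a = _ := funext ha
    exact cmi_comp_self_eq_zero p (pref x T) G A
  have hmono : cmi p g a (pref x 0) ≤ cmi p g a (pref x T) :=
    cmi_pref_mono hp g a x fun t ht => hstep (t + 1) (by omega) ht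
  rw [mi_eq_cmi_of_unique hsum g a (pref x 0)]
  linarith [cmi_nonneg hp g a (pref x 0)]
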